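/- arXiv:2404.12376 — 5 statements merged into one kernel-verified Lean document; each statement's English description precedes it below -/
import Mathlib

section
/- For every x ∈ {−1,1}^d, letting y = ∏_{j=1}^k x_j, the good network satisfies y·f(W*,x) = k!·2^k; equivalently, Σ_{b∈{−1,1}^k} (∏_{j=1}^k b_j)·(Σ_{j=1}^k b_j x_j)^k = (∏_{j=1}^k x_j)·k!·2^k. -/
noncomputable section

/-- ±1 encoding of a Boolean bit. -/
def pm (b : Bool) : ℝ := if b then 1 else -1

lemma sum_pi_succ (n : ℕ) (g : (Fin (n+1) → Bool) → ℝ) :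
    ∑ c : Fin (n+1) → Bool, g c
      = ∑ c : Fin n → Bool, (g (Fin.cons true c) + g (Fin.cons false c)) := by
  rw [← (Fin.consEquiv (fun _ => Bool)).sum_comp, Fintype.sum_prod_type, Fintype.sum_bool,
    ← Finset.sum_add_distrib]
  simp [Fin.consEquiv]

lemma alg (P S a : ℝ) (m : ℕ) :
    P * (a + S) ^ m + (-1 * P) * (-a + S) ^ m
      = ∑ i ∈ Finset.range (m+1),
          P * S ^ i * ((a ^ (m - i) - (-a) ^ (m - i)) * (m.choose i : ℝ)) := by
  have h1 : (a + S) ^ m = ∑ i ∈ Finset.range (m+1), S ^ i * a ^ (m - i) * (m.choose i : ℝ) := by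
    rw [add_comm a S, add_pow]
  have h2 : (-a + S) ^ m
      = ∑ i ∈ Finset.range (m+1), S ^ i * (-a) ^ (m - i) * (m.choose i : ℝ) := by
    rw [add_comm (-a) S, add_pow]
  rw [h1, h2, Finset.mul_sum, Finset.mul_sum, ← Finset.sum_add_distrib]
  exact Finset.sum_congr rfl fun i _ => by ring

lemma expand (n m : ℕ) (t : Fin (n+1) → ℝ) :
    ∑ c : Fin (n+1) → Bool, (∏ j, pm (c j)) * (∑ j, pm (c j) * t j) ^ m
      = ∑ i ∈ Finset.range (m+1),
          (∑ c : Fin n → Bool,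
              (∏ j, pm (c j)) * (∑ j, pm (c j) * t j.succ) ^ i)
            * ((t 0 ^ (m - i) - (- t 0) ^ (m - i)) * (m.choose i : ℝ)) := by
  rw [sum_pi_succ]
  have step : ∀ c : Fin n → Bool,
      (∏ j : Fin (n+1), pm ((Fin.cons true c : Fin (n+1) → Bool) j)) * (∑ j : Fin (n+1), pm ((Fin.cons true c : Fin (n+1) → Bool) j) * t j) ^ m +
        (∏ j : Fin (n+1), pm ((Fin.cons false c : Fin (n+1) → Bool) j)) * (∑ j : Fin (n+1), pm ((Fin.cons false c : Fin (n+1) → Bool) j) * t j) ^ m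
      = ∑ i ∈ Finset.range (m+1),
          ((∏ j, pm (c j)) * (∑ j, pm (c j) * t j.succ) ^ i)
            * ((t 0 ^ (m - i) - (- t 0) ^ (m - i)) * (m.choose i : ℝ)) := by
    intro c
    rw [Fin.prod_univ_succ, Fin.prod_univ_succ, Fin.sum_univ_succ, Fin.sum_univ_succ]
    simp only [Fin.cons_zero, Fin.cons_succ, show pm true = 1 from rfl,
      show pm false = -1 from rfl]
    linear_combination alg (∏ j, pm (c j)) (∑ j, pm (c j) * t j.succ) (t 0) m
  rw [Finset.sum_congr rfl fun c _ => step c, Finset.sum_comm]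
  exact Finset.sum_congr rfl fun i _ => by rw [Finset.sum_mul]

lemma core_zero : ∀ n m : ℕ, m < n → ∀ t : Fin n → ℝ,
    ∑ c : Fin n → Bool, (∏ j, pm (c j)) * (∑ j, pm (c j) * t j) ^ m = 0 := by
  intro n
  induction n with
  | zero => intro m hm; omega
  | succ n IH =>
    intro m hm t
    rw [expand]
    apply Finset.sum_eq_zero
    intro i hi
    rcases lt_or_ge i n with h | h
    · rw [IH i h (fun j => t j.succ), zero_mul]
    · have : i = m := by
        have := Finset.mem_range.mp hi; omega
      subst this
      simp

lemma core_main : ∀ n : ℕ, ∀ t : Fin n → ℝ,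
    ∑ c : Fin n → Bool, (∏ j, pm (c j)) * (∑ j, pm (c j) * t j) ^ n
      = (n.factorial : ℝ) * 2 ^ n * ∏ j, t j := by
  intro n
  induction n with
  | zero => simp
  | succ n IH =>
    intro t
    rw [expand]
    rw [Finset.sum_eq_single n]
    · rw [IH (fun j => t j.succ), Fin.prod_univ_succ]
      have h1 : n + 1 - n = 1 := by omega
      rw [h1, Nat.choose_succ_self_right]
      push_cast [Nat.factorial_succ]
      ring
    · intro i hi hne
      rcases lt_or_ge i n with h | h
      · rw [core_zero n i h (fun j => t j.succ), zero_mul]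
      · have : i = n + 1 := by have := Finset.mem_range.mp hi; omega
        subst this; simp
    · intro h; exact absurd (Finset.mem_range.mpr (by omega)) h

lemma pm_beq (a b : Bool) : pm (a == b) = pm a * pm b := by
  cases a <;> cases b <;> simp [pm]

/-- For every `x ∈ {−1,1}^d`, with `y = ∏_{j=1}^k x_j`, the good network
satisfies `y · f(W*, x) = k! · 2^k`; equivalently
`∑_{b ∈ {−1,1}^k} (∏_j b_j) · (∑_j b_j x_j)^k = (∏_{j=1}^k x_j) · k! · 2^k`. -/
theorem good_network_margin (k d : ℕ) (hk : 1 ≤ k) (hkd : k ≤ d)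
    (x : Fin d → ℝ) (hx : ∀ i, x i = 1 ∨ x i = -1) :
    ∑ b : Fin k → Bool,
        (∏ j, pm (b j)) * (∑ j : Fin k, pm (b j) * x (Fin.castLE hkd j)) ^ k
      = (∏ j : Fin k, x (Fin.castLE hkd j)) * (k.factorial : ℝ) * 2 ^ k := by
  set msk : Fin k → Bool := fun j => decide (x (Fin.castLE hkd j) = 1) with hm
  have hpm : ∀ j : Fin k, pm (msk j) = x (Fin.castLE hkd j) := by
    intro j
    rcases hx (Fin.castLE hkd j) with h | h <;> simp [hm, pm, h] <;>
      (intro h'; norm_num at h')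
  have hsq : ∀ j : Fin k, x (Fin.castLE hkd j) * x (Fin.castLE hkd j) = 1 := by
    intro j; rcases hx (Fin.castLE hkd j) with h | h <;> rw [h] <;> norm_num
  have hinv : Function.Involutive (fun c : Fin k → Bool => fun j => (c j == msk j)) := by
    intro c; funext j
    show ((c j == msk j) == msk j) = c j
    cases c j <;> cases msk j <;> rfl
  rw [← hinv.bijective.sum_comp]
  have step : ∀ c : Fin k → Bool,
      (∏ j, pm ((c j == msk j))) * (∑ j : Fin k, pm ((c j == msk j)) * x (Fin.castLE hkd j)) ^ k
        = (∏ j : Fin k, x (Fin.castLE hkd j)) *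
            ((∏ j, pm (c j)) * (∑ j : Fin k, pm (c j) * (fun _ : Fin k => (1:ℝ)) j) ^ k) := by
    intro c
    have h1 : (∏ j, pm ((c j == msk j))) =
        (∏ j, pm (c j)) * ∏ j : Fin k, x (Fin.castLE hkd j) := by
      simp only [pm_beq, hpm, Finset.prod_mul_distrib]
    have h2 : (∑ j : Fin k, pm ((c j == msk j)) * x (Fin.castLE hkd j))
        = ∑ j : Fin k, pm (c j) * (fun _ : Fin k => (1:ℝ)) j := by
      apply Finset.sum_congr rfl
      intro j _
      rw [pm_beq, hpm, mul_assoc, hsq]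
    rw [h1, h2]; ring
  rw [Finset.sum_congr rfl fun c _ => step c, ← Finset.mul_sum, core_main k (fun _ => 1)]
  simp; ring
end
end

section
/- Let k ≥ 1, let x be uniformly distributed on {−1,1}^d with y = ∏_{j=1}^k x_j, and let w ∈ ℝ^d. Then for every feature coordinate j ∈ {1,…,k}, E[ y · x_j · ⟨w,x⟩^{k−1} ] = (k−1)! · ∏_{i∈{1,…,k}, i≠j} w_i. -/
/-!
With `S = {1,…,k} \ {j}` one has `y · x_j = ∏_{i ∈ S} x_i` and `|S| = k - 1`. Expand
`⟨w,x⟩^|S|` by the multinomial theorem: the cube average of `∏_{i ∈ S} x_i · x^α` is `1` when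
every exponent of `1_S + α` is even and `0` otherwise. Among the multi-indices `α` of total degree
`|S|` only `α = 1_S` qualifies, and its multinomial coefficient is `|S|!`.
-/

noncomputable section

/-- Euclidean inner product of a real weight vector with a ±1 input. -/
def ip (d : ℕ) (w : Fin d → ℝ) (x : Fin d → Bool) : ℝ := ∑ i, w i * pm (x i)

/-- The k-parity label `y = ∏_{j=1}^k x_j`. -/
def lab (k d : ℕ) (x : Fin d → Bool) : ℝ :=
  ∏ j ∈ Finset.univ.filter (fun j : Fin d => (j : ℕ) < k), pm (x j)

open Finset

lemma pm_mul_self (b : Bool) : pm b * pm b = 1 := by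
  cases b <;> simp [pm]

lemma sum_pm_pow (e : ℕ) : ∑ b : Bool, pm b ^ e = if Even e then 2 else 0 := by
  rcases Nat.even_or_odd e with he | he
  · simp [pm, he, he.neg_one_pow]
  · simp [pm, he.neg_one_pow, Nat.not_even_iff_odd.mpr he]

section

variable {ι : Type*} [Fintype ι] [DecidableEq ι]

lemma sum_prod_pm_pow (e : ι → ℕ) :
    ∑ x : ι → Bool, ∏ i, pm (x i) ^ e i = if ∀ i, Even (e i) then 2 ^ Fintype.card ι else 0 := by
  rw [← Fintype.prod_sum fun i b => pm b ^ e i]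
  simp_rw [sum_pm_pow]
  split_ifs with he
  · simp [he]
  · obtain ⟨i, hi⟩ := not_forall.mp he
    exact prod_eq_zero (mem_univ i) (if_neg hi)

lemma prod_pow_ite_mem {M : Type*} [CommMonoid M] (S : Finset ι) (f : ι → M) :
    ∏ i, f i ^ (if i ∈ S then 1 else 0) = ∏ i ∈ S, f i := by
  simp [pow_ite, prod_ite_mem]

-- Parity forces `k ≥ 1_S` pointwise, and the total degrees agree.
lemma eq_ite_mem_of_even_add {S : Finset ι} {k : ι → ℕ} (hk : ∑ i, k i = #S)
    (heven : ∀ i, Even ((if i ∈ S then 1 else 0) + k i)) :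
    k = fun i => if i ∈ S then 1 else 0 := by
  have hle : ∀ i ∈ univ, (if i ∈ S then 1 else 0) ≤ k i := by
    intro i _
    split_ifs with hi
    · refine Nat.one_le_iff_ne_zero.mpr fun h0 => ?_
      simpa [hi, h0] using heven i
    · exact Nat.zero_le _
  have hsum : ∑ i, (if i ∈ S then 1 else 0) = ∑ i, k i := by
    rw [hk, sum_boole, filter_mem_eq_inter, univ_inter, Nat.cast_id]
  funext i
  exact ((sum_eq_sum_iff_of_le hle).mp hsum i (mem_univ i)).symm

lemma multinomial_ite_mem (S : Finset ι) :
    Nat.multinomial univ (fun i => if i ∈ S then 1 else 0) = (#S).factorial := by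
  have := Nat.multinomial_spec univ (fun i => if i ∈ S then 1 else 0)
  simp_all [apply_ite Nat.factorial]

theorem sum_prod_pm_mul_inner_pow_card (S : Finset ι) (w : ι → ℝ) :
    ∑ x : ι → Bool, (∏ i ∈ S, pm (x i)) * (∑ i, w i * pm (x i)) ^ #S
      = (#S).factorial * 2 ^ Fintype.card ι * ∏ i ∈ S, w i := by
  set χ : ι → ℕ := fun i => if i ∈ S then 1 else 0 with hχ
  have hexpand : ∀ x : ι → Bool, (∏ i ∈ S, pm (x i)) * (∑ i, w i * pm (x i)) ^ #S
      = ∑ k ∈ piAntidiag univ #S,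
          Nat.multinomial univ k * (∏ i, w i ^ k i) * ∏ i, pm (x i) ^ (χ i + k i) := by
    intro x
    rw [sum_pow_eq_sum_piAntidiag, mul_sum]
    refine sum_congr rfl fun k _ => ?_
    simp_rw [pow_add, prod_mul_distrib, mul_pow, prod_mul_distrib, hχ, prod_pow_ite_mem]
    ring
  have hsingle : ∀ k ∈ piAntidiag univ #S, k ≠ χ →
      (Nat.multinomial univ k : ℝ) * (∏ i, w i ^ k i) *
        (if ∀ i, Even (χ i + k i) then 2 ^ Fintype.card ι else 0) = 0 := by
    intro k hk hne
    rw [if_neg fun heven => hne (eq_ite_mem_of_even_add (mem_piAntidiag.mp hk).1 heven), mul_zero]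
  have hχmem : χ ∈ piAntidiag univ #S := by
    simp [mem_piAntidiag, hχ]
  simp_rw [hexpand]
  rw [sum_comm]
  simp_rw [← mul_sum, sum_prod_pm_pow]
  rw [sum_eq_single_of_mem χ hχmem hsingle, if_pos fun i => Even.add_self (χ i),
    hχ, multinomial_ite_mem, prod_pow_ite_mem]
  ring

end

lemma filter_lt_and_ne_eq_erase (k d : ℕ) (j : Fin d) :
    univ.filter (fun i : Fin d => (i : ℕ) < k ∧ i ≠ j)
      = (univ.filter fun i : Fin d => (i : ℕ) < k).erase j := by
  ext i
  simp [and_comm]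

lemma lab_mul_pm_eq_prod_erase {k d : ℕ} {j : Fin d} (hj : (j : ℕ) < k) (x : Fin d → Bool) :
    lab k d x * pm (x j) = ∏ i ∈ (univ.filter fun i : Fin d => (i : ℕ) < k).erase j, pm (x i) := by
  rw [lab, ← mul_prod_erase _ _ (mem_filter.mpr ⟨mem_univ j, hj⟩), mul_comm, ← mul_assoc,
    pm_mul_self, one_mul]

lemma card_filter_lt_erase {k d : ℕ} (hkd : k ≤ d) {j : Fin d} (hj : (j : ℕ) < k) :
    #((univ.filter fun i : Fin d => (i : ℕ) < k).erase j) = k - 1 := by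
  rw [card_erase_of_mem (mem_filter.mpr ⟨mem_univ j, hj⟩), Fin.card_filter_val_lt,
    min_eq_right hkd]

theorem population_gradient_feature_coordinate_general (k d : ℕ) (hkd : k ≤ d)
    (w : Fin d → ℝ) (j : Fin d) (hj : (j : ℕ) < k) :
    ((2 : ℝ) ^ d)⁻¹ * ∑ x : Fin d → Bool, lab k d x * pm (x j) * ip d w x ^ (k - 1)
      = ((k - 1).factorial : ℝ) *
          ∏ i ∈ Finset.univ.filter (fun i : Fin d => (i : ℕ) < k ∧ i ≠ j), w i := by
  simp_rw [lab_mul_pm_eq_prod_erase hj, ip, filter_lt_and_ne_eq_erase,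
    ← card_filter_lt_erase hkd hj, sum_prod_pm_mul_inner_pow_card, Fintype.card_fin]
  field_simp

/-- For `x` uniform on `{−1,1}^d`, `y = ∏_{j=1}^k x_j`, `w ∈ ℝ^d` and any
feature coordinate `j ∈ {1,…,k}`:
`E[ y · x_j · ⟨w,x⟩^{k−1} ] = (k−1)! · ∏_{i ∈ {1,…,k}, i ≠ j} w_i`. -/
theorem population_gradient_feature_coordinate (k d : ℕ) (hk : 1 ≤ k) (hkd : k ≤ d)
    (w : Fin d → ℝ) (j : Fin d) (hj : (j : ℕ) < k) :
    ((2 : ℝ) ^ d)⁻¹ * ∑ x : Fin d → Bool, lab k d x * pm (x j) * ip d w x ^ (k - 1)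
      = ((k - 1).factorial : ℝ) *
          ∏ i ∈ Finset.univ.filter (fun i : Fin d => (i : ℕ) < k ∧ i ≠ j), w i :=
  population_gradient_feature_coordinate_general k d hkd w j hj
end
end

section
/- Fix 1 ≤ k ≤ d, m neurons with weights w_r ∈ ℝ^d and second-layer signs a_r ∈ {−1,1}, a real α ≥ 0, and a point x ∈ {−1,1}^d. Say neuron r is good if a_r = ∏_{j=1}^k sign(w_{r,j}) and bad otherwise, and say a good neuron r has sign pattern b ∈ {−1,1}^k if sign(w_{r,j}) = b_j for all j ∈ {1,…,k}. Assume: (i) for every good neuron r and j ∈ {1,…,k}, w_{r,j} ∈ {−1,1}; (ii) |w_{r,j}| ≤ d^{−(k+1)} for every good neuron r and j ∈ {k+1,…,d}, and for every bad neuron r and all j ∈ {1,…,d}; (iii) for every b ∈ {−1,1}^k, the number of good neurons with sign pattern b lies in [(1−α)m/2^{k+1}, (1+α)m/2^{k+1}], and the number of bad neurons is at most (1+α)m/2; (iv) |Σ_{j=k+1}^d w_{r,j} x_j| ≤ d^{−k} for every r ∈ {1,…,m}. Then |f(W,x) − (m/2^{k+1})·f(W*,x)| ≤ ( α·k^k·2^{−k}·(1+e^{−2})^k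 + 0.5·(1+α)·k·d^{−k}·(k+d^{−k})^{k−1} + 0.5·(1+α)·(2d^{−k})^k )·m. -/
open scoped Classical

noncomputable section

/-- Two-layer network `f(W,x) = Σ_r a_r ⟨w_r,x⟩^k` with ±1 second layer. -/
def net (k d m : ℕ) (a : Fin m → Bool) (W : Fin m → Fin d → ℝ) (x : Fin d → Bool) : ℝ :=
  ∑ r, pm (a r) * ip d (W r) x ^ k

/-- The good network `f(W*,x) = Σ_{b ∈ {−1,1}^k} (∏_j b_j)·(Σ_j b_j x_j)^k`. -/
def goodNet (k d : ℕ) (hkd : k ≤ d) (x : Fin d → Bool) : ℝ :=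
  ∑ b : Fin k → Bool,
    (∏ j, pm (b j)) * (∑ j : Fin k, pm (b j) * pm (x (Fin.castLE hkd j))) ^ k

/-- Neuron `r` is good: `a_r = ∏_{j=1}^k sign(w_{r,j})`. -/
def goodNeuron (k d m : ℕ) (W : Fin m → Fin d → ℝ) (a : Fin m → Bool) (r : Fin m) : Prop :=
  pm (a r) = ∏ j ∈ Finset.univ.filter (fun j : Fin d => (j : ℕ) < k), Real.sign (W r j)

/-- Neuron `r` has sign pattern `b ∈ {−1,1}^k`: `sign(w_{r,j}) = b_j` for `j ∈ {1,…,k}`. -/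
def hasPattern (k d m : ℕ) (hkd : k ≤ d) (W : Fin m → Fin d → ℝ) (b : Fin k → Bool)
    (r : Fin m) : Prop :=
  ∀ j : Fin k, Real.sign (W r (Fin.castLE hkd j)) = pm (b j)

/-!
Sort the good neurons by sign pattern `b`. A good neuron with pattern `b` computes
`(∏ b_j) (⟨w*_b, x⟩ + δ_r)^k` with `|δ_r| ≤ d^{-k}`, so by the mean value bound a pattern class
contributes `#class · (∏ b_j) ⟨w*_b, x⟩^k` up to `k d^{-k} (k + d^{-k})^{k-1}` per neuron, and
replacing `#class` by `m / 2^{k+1}` costs `α m 2^{-(k+1)} |⟨w*_b, x⟩|^k`. Since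
`⟨w*_b, x⟩ = k - 2h` with `h` the Hamming distance from `b` to `(x_1, …, x_k)`, and
`|k - 2h|^k ≤ k^k (e^{-2h} + e^{-2(k-h)})` by `1 - t ≤ e^{-t}`, these costs sum over `b` to
`α m k^k 2^{-k} (1 + e^{-2})^k`. A bad neuron has `|⟨w_r, x⟩| ≤ 2 d^{-k}`.
-/

open Finset

lemma sub_two_mul_pow_le_pow_mul_exp (n : ℕ) {t : ℝ} (ht : 2 * t ≤ n) :
    ((n : ℝ) - 2 * t) ^ n ≤ n ^ n * Real.exp (-(2 * t)) := by
  have hfactor : ((n : ℝ) - 2 * t) ^ n = n ^ n * (1 - 2 * t / n) ^ n := by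
    rcases eq_or_ne n 0 with rfl | hn
    · simp
    · rw [← mul_pow]; congr 1; field_simp
  rw [hfactor]
  gcongr
  exact Real.one_sub_div_pow_le_exp_neg ht

lemma abs_sub_two_mul_pow_le {n i : ℕ} (hi : i ≤ n) :
    |(n : ℝ) - 2 * i| ^ n ≤ n ^ n * (Real.exp (-2) ^ i + Real.exp (-2) ^ (n - i)) := by
  have hhalf {j : ℕ} (hj : 2 * j ≤ n) : |(n : ℝ) - 2 * j| ^ n ≤ n ^ n * Real.exp (-2) ^ j := by
    have hj' : (2 * j : ℝ) ≤ n := by exact_mod_cast hj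
    rw [abs_of_nonneg (by linarith), ← Real.exp_nat_mul, show (j : ℝ) * -2 = -(2 * j) by ring]
    exact sub_two_mul_pow_le_pow_mul_exp n hj'
  rcases le_total (2 * i) n with h | h
  · refine (hhalf h).trans ?_
    gcongr
    exact le_add_of_nonneg_right (by positivity)
  · have hsymm : |(n : ℝ) - 2 * i| = |(n : ℝ) - 2 * ↑(n - i)| := by
      rw [Nat.cast_sub hi, abs_sub_comm]; ring_nf
    rw [hsymm]
    refine (hhalf (by omega)).trans ?_
    gcongr
    exact le_add_of_nonneg_left (by positivity)

lemma abs_pm (s : Bool) : |pm s| = 1 := by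
  cases s <;> simp [pm]

lemma pm_mul_pm (s t : Bool) : pm s * pm t = 1 - 2 * if s ≠ t then 1 else 0 := by
  cases s <;> cases t <;> norm_num [pm]

lemma sign_eq_pm_iff {w : ℝ} (hw : w = 1 ∨ w = -1) (s : Bool) :
    Real.sign w = pm s ↔ decide (w = 1) = s := by
  rcases hw with rfl | rfl <;> cases s <;> norm_num [pm, Real.sign_of_neg]

section SignVectors

variable {ι : Type*} [Fintype ι]

lemma sum_pm_mul_pm (b y : ι → Bool) :
    ∑ j, pm (b j) * pm (y j) = Fintype.card ι - 2 * hammingDist b y := by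
  simp only [pm_mul_pm, sum_sub_distrib, ← mul_sum, sum_boole, hammingDist]
  simp

lemma abs_sum_pm_mul_pm_le (b y : ι → Bool) : |∑ j, pm (b j) * pm (y j)| ≤ Fintype.card ι :=
  calc _ ≤ ∑ j, |pm (b j) * pm (y j)| := abs_sum_le_sum_abs _ _
    _ = Fintype.card ι := by simp [abs_mul, abs_pm]

lemma hammingDist_not_right (b y : ι → Bool) :
    hammingDist b (fun j => !y j) = Fintype.card ι - hammingDist b y := by
  rw [hammingDist, hammingDist, ← card_univ,
    ← card_filter_add_card_filter_not (s := univ) (fun j => b j ≠ y j), add_tsub_cancel_left]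
  congr 1; ext j; cases b j <;> cases y j <;> simp

lemma sum_pow_hammingDist {R : Type*} [CommSemiring R] [DecidableEq ι] (y : ι → Bool) (c : R) :
    ∑ b : ι → Bool, c ^ hammingDist b y = (1 + c) ^ Fintype.card ι := by
  have hprod (b : ι → Bool) : c ^ hammingDist b y = ∏ j, if b j ≠ y j then c else 1 := by
    rw [prod_ite, prod_const_one, mul_one, prod_const, hammingDist]
  simp_rw [hprod]
  rw [← Fintype.prod_sum (fun j (t : Bool) => if t ≠ y j then c else 1), ← card_univ, ← prod_const]
  refine prod_congr rfl fun j _ => ?_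
  cases y j <;> simp [add_comm]

lemma sum_abs_sum_pm_mul_pm_pow_le [DecidableEq ι] (y : ι → Bool) :
    ∑ b : ι → Bool, |∑ j, pm (b j) * pm (y j)| ^ Fintype.card ι ≤
      2 * (Fintype.card ι : ℝ) ^ Fintype.card ι * (1 + Real.exp (-2)) ^ Fintype.card ι := by
  calc _ ≤ ∑ b : ι → Bool, (Fintype.card ι : ℝ) ^ Fintype.card ι *
          (Real.exp (-2) ^ hammingDist b y + Real.exp (-2) ^ hammingDist b (fun j => !y j)) := by
        gcongr with b
        rw [sum_pm_mul_pm, hammingDist_not_right]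
        exact abs_sub_two_mul_pow_le hammingDist_le_card_fintype
    _ = _ := by
        rw [← mul_sum, sum_add_distrib, sum_pow_hammingDist, sum_pow_hammingDist]; ring

end SignVectors

lemma abs_sum_add_pow_sub_le {ι : Type*} (s : Finset ι) (n : ℕ) {S K ε C : ℝ} {δ : ι → ℝ}
    (hS : |S| ≤ K) (hδ : ∀ i ∈ s, |δ i| ≤ ε) :
    |∑ i ∈ s, (S + δ i) ^ n - C * S ^ n| ≤
      #s * (n * ε * (K + ε) ^ (n - 1)) + |#s - C| * |S| ^ n := by
  have hsplit : ∑ i ∈ s, (S + δ i) ^ n - C * S ^ n =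
      ∑ i ∈ s, ((S + δ i) ^ n - S ^ n) + (#s - C) * S ^ n := by
    rw [sum_sub_distrib, sum_const, nsmul_eq_mul]; ring
  have hterm (i : ι) (hi : i ∈ s) : |(S + δ i) ^ n - S ^ n| ≤ n * ε * (K + ε) ^ (n - 1) := by
    have hε : 0 ≤ ε := (abs_nonneg _).trans (hδ i hi)
    calc _ ≤ |S + δ i - S| * n * max |S + δ i| |S| ^ (n - 1) := abs_pow_sub_pow_le ..
      _ ≤ ε * n * (K + ε) ^ (n - 1) := by
        gcongr
        · simpa using hδ i hi
        · exact max_le ((abs_add_le _ _).trans (add_le_add hS (hδ i hi))) (by linarith)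
      _ = _ := by ring
  rw [hsplit]
  calc _ ≤ ∑ i ∈ s, |(S + δ i) ^ n - S ^ n| + |(#s - C) * S ^ n| :=
        (abs_add_le _ _).trans (by gcongr; exact abs_sum_le_sum_abs _ _)
    _ ≤ _ := by
        rw [abs_mul, abs_pow]
        gcongr
        simpa using sum_le_card_nsmul s _ _ hterm

section Network

variable {k d m : ℕ} (hkd : k ≤ d)

@[to_additive]
lemma prod_filter_lt_eq_prod_castLE {M : Type*} [CommMonoid M] (f : Fin d → M) :
    ∏ j ∈ univ.filter (fun j : Fin d => (j : ℕ) < k), f j = ∏ j : Fin k, f (Fin.castLE hkd j) := by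
  have himage : univ.filter (fun j : Fin d => (j : ℕ) < k) = univ.map (Fin.castLEEmb hkd) := by
    ext j
    simp only [mem_filter, mem_univ, true_and, mem_map, Fin.coe_castLEEmb]
    exact ⟨fun hj => ⟨⟨j, hj⟩, rfl⟩, by rintro ⟨i, rfl⟩; exact i.2⟩
  rw [himage, prod_map]
  rfl

/-- `⟨w*_b, x⟩`. -/
def patternIp (hkd : k ≤ d) (x : Fin d → Bool) (b : Fin k → Bool) : ℝ :=
  ∑ j : Fin k, pm (b j) * pm (x (Fin.castLE hkd j))

/-- The part `∑_{j > k} w_j x_j` of `⟨w, x⟩` (coordinates are indexed from `0`). -/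
def tailIp (k d : ℕ) (w : Fin d → ℝ) (x : Fin d → Bool) : ℝ :=
  ∑ j ∈ univ.filter (fun j : Fin d => k ≤ (j : ℕ)), w j * pm (x j)

def patternClass (hkd : k ≤ d) (W : Fin m → Fin d → ℝ) (a : Fin m → Bool) (b : Fin k → Bool) :
    Finset (Fin m) :=
  univ.filter fun r => goodNeuron k d m W a r ∧ hasPattern k d m hkd W b r

def badNeurons (k d m : ℕ) (W : Fin m → Fin d → ℝ) (a : Fin m → Bool) : Finset (Fin m) :=
  univ.filter fun r => ¬ goodNeuron k d m W a r

def signPattern (hkd : k ≤ d) (w : Fin d → ℝ) : Fin k → Bool :=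
  fun j => decide (w (Fin.castLE hkd j) = 1)

lemma ip_eq_sum_castLE_add_tailIp (w : Fin d → ℝ) (x : Fin d → Bool) :
    ip d w x = ∑ j : Fin k, w (Fin.castLE hkd j) * pm (x (Fin.castLE hkd j)) + tailIp k d w x := by
  rw [ip, ← sum_filter_add_sum_filter_not univ (fun j : Fin d => (j : ℕ) < k),
    sum_filter_lt_eq_sum_castLE hkd]
  simp only [not_lt, tailIp]

variable {W : Fin m → Fin d → ℝ} {a : Fin m → Bool} {r : Fin m}

lemma hasPattern_iff_signPattern_eq (hW : ∀ j : Fin d, (j : ℕ) < k → W r j = 1 ∨ W r j = -1)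
    (b : Fin k → Bool) : hasPattern k d m hkd W b r ↔ signPattern hkd (W r) = b := by
  simp only [hasPattern, funext_iff, signPattern]
  exact forall_congr' fun j => sign_eq_pm_iff (hW _ j.2) (b j)

lemma net_eq_sum_patternClass_add_sum_badNeurons (x : Fin d → Bool)
    (h1 : ∀ r : Fin m, goodNeuron k d m W a r →
      ∀ j : Fin d, (j : ℕ) < k → W r j = 1 ∨ W r j = -1) :
    net k d m a W x = ∑ b, ∑ r ∈ patternClass hkd W a b, pm (a r) * ip d (W r) x ^ k +
      ∑ r ∈ badNeurons k d m W a, pm (a r) * ip d (W r) x ^ k := by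
  rw [net, ← sum_filter_add_sum_filter_not univ (goodNeuron k d m W a),
    ← sum_fiberwise _ (fun r => signPattern hkd (W r))]
  congr 1
  refine sum_congr rfl fun b _ => sum_congr ?_ fun _ _ => rfl
  ext r
  simp only [patternClass, mem_filter, mem_univ, true_and, and_congr_right_iff]
  exact fun hr => (hasPattern_iff_signPattern_eq hkd (h1 r hr) b).symm

lemma pm_mul_ip_pow_of_mem_patternClass (x : Fin d → Bool) {b : Fin k → Bool}
    (hW : ∀ j : Fin d, (j : ℕ) < k → W r j = 1 ∨ W r j = -1)
    (hr : r ∈ patternClass hkd W a b) :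
    pm (a r) * ip d (W r) x ^ k =
      (∏ j, pm (b j)) * (patternIp hkd x b + tailIp k d (W r) x) ^ k := by
  obtain ⟨hgood, hpat⟩ := (mem_filter.mp hr).2
  have hfeature (j : Fin k) : W r (Fin.castLE hkd j) = pm (b j) := by
    rcases hW (Fin.castLE hkd j) j.2 with h | h <;> rw [← hpat j, h] <;> norm_num [Real.sign_of_neg]
  rw [hgood, prod_filter_lt_eq_prod_castLE hkd, prod_congr rfl fun j _ => hpat j,
    ip_eq_sum_castLE_add_tailIp hkd, patternIp]
  simp only [hfeature]

end Network

section Estimates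

variable {k d m : ℕ} {W : Fin m → Fin d → ℝ} {a : Fin m → Bool}

lemma abs_patternIp_le (hkd : k ≤ d) (x : Fin d → Bool) (b : Fin k → Bool) :
    |patternIp hkd x b| ≤ k := by
  simpa [patternIp] using abs_sum_pm_mul_pm_le b (fun j => x (Fin.castLE hkd j))

lemma abs_sum_patternClass_sub_le (hkd : k ≤ d) (x : Fin d → Bool) {α : ℝ} (b : Fin k → Bool)
    (h1 : ∀ r : Fin m, goodNeuron k d m W a r →
      ∀ j : Fin d, (j : ℕ) < k → W r j = 1 ∨ W r j = -1)
    (h4 : ∀ r : Fin m, |tailIp k d (W r) x| ≤ ((d : ℝ) ^ k)⁻¹)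
    (hcard : (1 - α) * m / 2 ^ (k + 1) ≤ (#(patternClass hkd W a b) : ℝ) ∧
      (#(patternClass hkd W a b) : ℝ) ≤ (1 + α) * m / 2 ^ (k + 1)) :
    |∑ r ∈ patternClass hkd W a b, pm (a r) * ip d (W r) x ^ k -
        m / 2 ^ (k + 1) * ((∏ j, pm (b j)) * patternIp hkd x b ^ k)| ≤
      (1 + α) * m / 2 ^ (k + 1) * (k * ((d : ℝ) ^ k)⁻¹ * (k + ((d : ℝ) ^ k)⁻¹) ^ (k - 1)) +
        α * m / 2 ^ (k + 1) * |patternIp hkd x b| ^ k := by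
  have hsign : |∏ j, pm (b j)| = 1 := by simp [abs_prod, abs_pm]
  rw [sum_congr rfl fun r hr =>
      pm_mul_ip_pow_of_mem_patternClass hkd x (h1 r (mem_filter.mp hr).2.1) hr,
    ← mul_sum, mul_left_comm, ← mul_sub, abs_mul, hsign, one_mul]
  refine (abs_sum_add_pow_sub_le _ k (abs_patternIp_le hkd x b) fun r _ => h4 r).trans ?_
  gcongr
  · exact hcard.2
  · have hup : (1 + α) * m / 2 ^ (k + 1) = m / 2 ^ (k + 1) + α * m / 2 ^ (k + 1) := by ring
    have hlow : (1 - α) * m / 2 ^ (k + 1) = m / 2 ^ (k + 1) - α * m / 2 ^ (k + 1) := by ring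
    exact abs_sub_le_iff.mpr ⟨by linarith [hcard.2], by linarith [hcard.1]⟩

lemma nat_mul_inv_pow_succ_le (hkd : k ≤ d) : k * ((d : ℝ) ^ (k + 1))⁻¹ ≤ ((d : ℝ) ^ k)⁻¹ := by
  rcases eq_or_ne (d : ℝ) 0 with hd | hd
  · simp [hd]
  · calc k * ((d : ℝ) ^ (k + 1))⁻¹ ≤ d * ((d : ℝ) ^ (k + 1))⁻¹ := by gcongr
      _ = ((d : ℝ) ^ k)⁻¹ := by rw [pow_succ, mul_inv, mul_left_comm, mul_inv_cancel₀ hd, mul_one]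

lemma abs_ip_le_of_forall_abs_le (hkd : k ≤ d) (x : Fin d → Bool) {w : Fin d → ℝ}
    (hw : ∀ j, |w j| ≤ ((d : ℝ) ^ (k + 1))⁻¹) (htail : |tailIp k d w x| ≤ ((d : ℝ) ^ k)⁻¹) :
    |ip d w x| ≤ 2 * ((d : ℝ) ^ k)⁻¹ := by
  have hhead : |∑ j : Fin k, w (Fin.castLE hkd j) * pm (x (Fin.castLE hkd j))| ≤
      ((d : ℝ) ^ k)⁻¹ :=
    calc _ ≤ ∑ j : Fin k, |w (Fin.castLE hkd j) * pm (x (Fin.castLE hkd j))| :=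
          abs_sum_le_sum_abs _ _
      _ ≤ ∑ _j : Fin k, ((d : ℝ) ^ (k + 1))⁻¹ := by
          gcongr with j
          rw [abs_mul, abs_pm, mul_one]
          exact hw _
      _ = k * ((d : ℝ) ^ (k + 1))⁻¹ := by simp
      _ ≤ ((d : ℝ) ^ k)⁻¹ := nat_mul_inv_pow_succ_le hkd
  rw [ip_eq_sum_castLE_add_tailIp hkd]
  linarith [abs_add_le (∑ j : Fin k, w (Fin.castLE hkd j) * pm (x (Fin.castLE hkd j)))
    (tailIp k d w x)]

lemma abs_sum_badNeurons_le (hkd : k ≤ d) (x : Fin d → Bool) {N : ℝ}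
    (h2b : ∀ r : Fin m, ¬ goodNeuron k d m W a r →
      ∀ j : Fin d, |W r j| ≤ ((d : ℝ) ^ (k + 1))⁻¹)
    (hcard : (#(badNeurons k d m W a) : ℝ) ≤ N)
    (h4 : ∀ r : Fin m, |tailIp k d (W r) x| ≤ ((d : ℝ) ^ k)⁻¹) :
    |∑ r ∈ badNeurons k d m W a, pm (a r) * ip d (W r) x ^ k| ≤
      N * (2 * ((d : ℝ) ^ k)⁻¹) ^ k :=
  calc _ ≤ ∑ r ∈ badNeurons k d m W a, |pm (a r) * ip d (W r) x ^ k| := abs_sum_le_sum_abs _ _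
    _ ≤ ∑ _r ∈ badNeurons k d m W a, (2 * ((d : ℝ) ^ k)⁻¹) ^ k := by
        gcongr with r hr
        rw [abs_mul, abs_pm, one_mul, abs_pow]
        gcongr
        exact abs_ip_le_of_forall_abs_le hkd x (h2b r (mem_filter.mp hr).2) (h4 r)
    _ = #(badNeurons k d m W a) * (2 * ((d : ℝ) ^ k)⁻¹) ^ k := by simp
    _ ≤ _ := by gcongr

end Estimates

theorem trained_net_approximates_good_net_general (k d m : ℕ) (hkd : k ≤ d)
    (W : Fin m → Fin d → ℝ) (a : Fin m → Bool) (α : ℝ) (hα : 0 ≤ α) (x : Fin d → Bool)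
    (h1 : ∀ r : Fin m, goodNeuron k d m W a r →
      ∀ j : Fin d, (j : ℕ) < k → W r j = 1 ∨ W r j = -1)
    (h2b : ∀ r : Fin m, ¬ goodNeuron k d m W a r →
      ∀ j : Fin d, |W r j| ≤ ((d : ℝ) ^ (k + 1))⁻¹)
    (h3 : ∀ b : Fin k → Bool,
      (1 - α) * m / 2 ^ (k + 1) ≤
          ((Finset.univ.filter (fun r : Fin m =>
            goodNeuron k d m W a r ∧ hasPattern k d m hkd W b r)).card : ℝ) ∧
        ((Finset.univ.filter (fun r : Fin m =>
            goodNeuron k d m W a r ∧ hasPattern k d m hkd W b r)).card : ℝ) ≤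
          (1 + α) * m / 2 ^ (k + 1))
    (h3b : ((Finset.univ.filter (fun r : Fin m => ¬ goodNeuron k d m W a r)).card : ℝ) ≤
      (1 + α) * m / 2)
    (h4 : ∀ r : Fin m,
      |∑ j ∈ Finset.univ.filter (fun j : Fin d => k ≤ (j : ℕ)), W r j * pm (x j)| ≤
        ((d : ℝ) ^ k)⁻¹) :
    |net k d m a W x - (m : ℝ) / 2 ^ (k + 1) * goodNet k d hkd x| ≤
      (α * (k : ℝ) ^ k * ((2 : ℝ) ^ k)⁻¹ * (1 + Real.exp (-2)) ^ k +
        0.5 * (1 + α) * (k : ℝ) * ((d : ℝ) ^ k)⁻¹ * ((k : ℝ) + ((d : ℝ) ^ k)⁻¹) ^ (k - 1) +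
        0.5 * (1 + α) * (2 * ((d : ℝ) ^ k)⁻¹) ^ k) * m := by
  set ε : ℝ := ((d : ℝ) ^ k)⁻¹
  have hbad := abs_sum_badNeurons_le hkd x h2b h3b h4
  have henergy : ∑ b, |patternIp hkd x b| ^ k ≤ 2 * (k : ℝ) ^ k * (1 + Real.exp (-2)) ^ k := by
    simpa [patternIp] using sum_abs_sum_pm_mul_pm_pow_le (fun j => x (Fin.castLE hkd j))
  rw [net_eq_sum_patternClass_add_sum_badNeurons hkd x h1, goodNet, mul_sum,
    add_sub_right_comm, ← sum_sub_distrib]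
  calc _ ≤ ∑ b, |∑ r ∈ patternClass hkd W a b, pm (a r) * ip d (W r) x ^ k -
          m / 2 ^ (k + 1) * ((∏ j, pm (b j)) * patternIp hkd x b ^ k)| +
          |∑ r ∈ badNeurons k d m W a, pm (a r) * ip d (W r) x ^ k| :=
        (abs_add_le _ _).trans (by gcongr; exact abs_sum_le_sum_abs _ _)
    _ ≤ ∑ b, ((1 + α) * m / 2 ^ (k + 1) * (k * ε * (k + ε) ^ (k - 1)) +
          α * m / 2 ^ (k + 1) * |patternIp hkd x b| ^ k) + (1 + α) * m / 2 * (2 * ε) ^ k := by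
        gcongr with b
        exact abs_sum_patternClass_sub_le hkd x b h1 h4 (h3 b)
    _ = 2 ^ k * ((1 + α) * m / 2 ^ (k + 1) * (k * ε * (k + ε) ^ (k - 1))) +
          α * m / 2 ^ (k + 1) * ∑ b, |patternIp hkd x b| ^ k + (1 + α) * m / 2 * (2 * ε) ^ k := by
        rw [sum_add_distrib, sum_const, ← mul_sum]
        simp
    _ ≤ 2 ^ k * ((1 + α) * m / 2 ^ (k + 1) * (k * ε * (k + ε) ^ (k - 1))) +
          α * m / 2 ^ (k + 1) * (2 * (k : ℝ) ^ k * (1 + Real.exp (-2)) ^ k) +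
          (1 + α) * m / 2 * (2 * ε) ^ k := by gcongr
    _ = _ := by field_simp; ring

/-- Deterministic approximation of the scaled good network by a trained
network whose good neurons have ±1 feature coordinates, whose bad neurons and noise
coordinates are tiny, whose neuron counts are balanced, and whose noise inner products
are small. -/
theorem trained_net_approximates_good_net (k d m : ℕ) (hk : 1 ≤ k) (hkd : k ≤ d)
    (W : Fin m → Fin d → ℝ) (a : Fin m → Bool) (α : ℝ) (hα : 0 ≤ α) (x : Fin d → Bool)
    (h1 : ∀ r : Fin m, goodNeuron k d m W a r →
      ∀ j : Fin d, (j : ℕ) < k → W r j = 1 ∨ W r j = -1)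
    (h2g : ∀ r : Fin m, goodNeuron k d m W a r →
      ∀ j : Fin d, k ≤ (j : ℕ) → |W r j| ≤ ((d : ℝ) ^ (k + 1))⁻¹)
    (h2b : ∀ r : Fin m, ¬ goodNeuron k d m W a r →
      ∀ j : Fin d, |W r j| ≤ ((d : ℝ) ^ (k + 1))⁻¹)
    (h3 : ∀ b : Fin k → Bool,
      (1 - α) * m / 2 ^ (k + 1) ≤
          ((Finset.univ.filter (fun r : Fin m =>
            goodNeuron k d m W a r ∧ hasPattern k d m hkd W b r)).card : ℝ) ∧
        ((Finset.univ.filter (fun r : Fin m =>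
            goodNeuron k d m W a r ∧ hasPattern k d m hkd W b r)).card : ℝ) ≤
          (1 + α) * m / 2 ^ (k + 1))
    (h3b : ((Finset.univ.filter (fun r : Fin m => ¬ goodNeuron k d m W a r)).card : ℝ) ≤
      (1 + α) * m / 2)
    (h4 : ∀ r : Fin m,
      |∑ j ∈ Finset.univ.filter (fun j : Fin d => k ≤ (j : ℕ)), W r j * pm (x j)| ≤
        ((d : ℝ) ^ k)⁻¹) :
    |net k d m a W x - (m : ℝ) / 2 ^ (k + 1) * goodNet k d hkd x| ≤
      (α * (k : ℝ) ^ k * ((2 : ℝ) ^ k)⁻¹ * (1 + Real.exp (-2)) ^ k +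
        0.5 * (1 + α) * (k : ℝ) * ((d : ℝ) ^ k)⁻¹ * ((k : ℝ) + ((d : ℝ) ^ k)⁻¹) ^ (k - 1) +
        0.5 * (1 + α) * (2 * ((d : ℝ) ^ k)⁻¹) ^ k) * m :=
  trained_net_approximates_good_net_general k d m hkd W a α hα x h1 h2b h3 h3b h4
end
end

section
/- For every positive integer k, Σ_{i=0}^{k} (k choose i)·(−1)^i·(k−2i)^k = 2^k·k!. -/
open Finset Polynomial Function
open scoped fwdDiff

lemma fwdDiff_iter_poly (h : ℤ) :
    ∀ (n : ℕ) (P : Polynomial ℤ), P.natDegree ≤ n →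
      (fwdDiff h)^[n] (fun x => P.eval x) = fun _ => P.coeff n * h ^ n * n.factorial := by
  intro n
  induction n with
  | zero =>
    intro P hP
    obtain ⟨a, rfl⟩ := Polynomial.natDegree_eq_zero.mp (Nat.le_zero.mp hP)
    simp
  | succ n IH =>
    intro P hP
    set Q : Polynomial ℤ := taylor h P - P with hQ
    have hQc : ∀ m, Q.coeff m = (hasseDeriv m P).eval h - P.coeff m := by
      intro m
      simp [hQ, Polynomial.taylor_coeff]
    have heval_ge : ∀ m, n + 1 ≤ m → (hasseDeriv m P).eval h = P.coeff m := by
      intro m hm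
      have hd : (hasseDeriv m P).natDegree < 1 := by
        have := Polynomial.natDegree_hasseDeriv_le P m
        omega
      rw [Polynomial.eval_eq_sum_range' hd]
      simp [Polynomial.hasseDeriv_coeff]
    have hQdeg : Q.natDegree ≤ n := by
      rw [Polynomial.natDegree_le_iff_coeff_eq_zero]
      intro m hm
      rw [hQc, heval_ge m (by omega), sub_self]
    have hQn : Q.coeff n = (n + 1) * P.coeff (n + 1) * h := by
      have hd : (hasseDeriv n P).natDegree < 2 := by
        have := Polynomial.natDegree_hasseDeriv_le P n
        omega
      have hc : (1 + n).choose n = n + 1 := by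
        rw [Nat.add_comm, Nat.choose_succ_self_right]
      rw [hQc, Polynomial.eval_eq_sum_range' hd, Finset.sum_range_succ, Finset.sum_range_one]
      simp only [Polynomial.hasseDeriv_coeff, zero_add, hc, Nat.choose_self, Nat.cast_one,
        one_mul, pow_zero, pow_one]
      rw [Nat.add_comm 1 n]
      push_cast
      ring
    have hstep : fwdDiff h (fun x => P.eval x) = fun x => Q.eval x := by
      funext x
      simp [fwdDiff, hQ, Polynomial.taylor_eval, add_comm]
    rw [Function.iterate_succ_apply, hstep, IH Q hQdeg, hQn]
    funext x
    rw [Nat.factorial_succ]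
    push_cast
    ring

/-- For every positive integer `k`,
`∑ i in range (k+1), (k choose i) * (-1)^i * (k - 2i)^k = 2^k * k!` (as integers). -/
theorem binomial_alternating_sum_eq (k : ℕ) (hk : 1 ≤ k) :
    ∑ i ∈ Finset.range (k + 1),
        (k.choose i : ℤ) * (-1) ^ i * ((k : ℤ) - 2 * i) ^ k
      = 2 ^ k * (k.factorial : ℤ) := by
  have hP : (Polynomial.X ^ k : Polynomial ℤ).natDegree ≤ k := by
    simp
  have key := fwdDiff_iter_poly (-2) k (Polynomial.X ^ k) hP
  have h1 := fwdDiff_iter_eq_sum_shift (-2 : ℤ) (fun x => Polynomial.eval x (Polynomial.X ^ k)) k (k : ℤ)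
  rw [key] at h1
  simp only [Polynomial.eval_pow, Polynomial.eval_X, Polynomial.coeff_X_pow, if_true,
    one_mul, smul_eq_mul, zsmul_eq_mul, nsmul_eq_mul] at h1
  have h2 : ∀ i ∈ Finset.range (k + 1),
      ((-1 : ℤ) ^ (k - i) * (k.choose i : ℤ)) * ((k : ℤ) + (i : ℤ) * (-2)) ^ k
        = (-1) ^ k * ((k.choose i : ℤ) * (-1) ^ i * ((k : ℤ) - 2 * i) ^ k) := by
    intro i hi
    rw [Finset.mem_range] at hi
    have : (-1 : ℤ) ^ (k - i) = (-1) ^ k * (-1) ^ i := by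
      rw [← pow_add, neg_one_pow_eq_pow_mod_two, neg_one_pow_eq_pow_mod_two (n := k + i)]
      congr 1
      omega
    rw [this]
    ring
  rw [Finset.sum_congr rfl h2, ← Finset.mul_sum] at h1
  have e1 : (-1 : ℤ) ^ k * (-1 : ℤ) ^ k = 1 := by rw [← mul_pow]; norm_num
  have e2 : (-1 : ℤ) ^ k * (-2 : ℤ) ^ k = 2 ^ k := by rw [← mul_pow]; norm_num
  calc ∑ i ∈ Finset.range (k + 1),
        (k.choose i : ℤ) * (-1) ^ i * ((k : ℤ) - 2 * i) ^ k
      = ((-1 : ℤ) ^ k * (-1 : ℤ) ^ k) * ∑ i ∈ Finset.range (k + 1),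
        (k.choose i : ℤ) * (-1) ^ i * ((k : ℤ) - 2 * i) ^ k := by rw [e1, one_mul]
    _ = (-1 : ℤ) ^ k * ((-2) ^ k * (k.factorial : ℤ)) := by rw [mul_assoc, ← h1]
    _ = 2 ^ k * (k.factorial : ℤ) := by rw [← mul_assoc, e2]
end

section
/- For every positive integer k, Σ_{i=0}^{k} (k choose i)·|k−2i|^k ≤ 2·k^k·(1+e^{−2})^k. -/
/-!
For `2i ≤ k`, `1 - x ≤ e^{-x}` gives `(k - 2i)^k ≤ k^k e^{-2i}`, and the symmetry `i ↦ k - i`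
handles `2i > k`. Bounding every term by both endpoint estimates at once,
`|k - 2i|^k ≤ k^k (e^{-2i} + e^{-2(k-i)})`, avoids splitting the sum at `k / 2`: the binomial
theorem sums each of the two halves to `k^k (1 + e^{-2})^k`.
-/

open Finset Real

theorem natCast_sub_pow_le_pow_mul_exp_neg {n : ℕ} {t : ℝ} (ht : t ≤ n) :
    ((n : ℝ) - t) ^ n ≤ (n : ℝ) ^ n * exp (-t) := by
  rcases eq_or_ne n 0 with rfl | hn
  · simpa using ht
  have hn' : (n : ℝ) ≠ 0 := Nat.cast_ne_zero.mpr hn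
  calc ((n : ℝ) - t) ^ n = (n : ℝ) ^ n * (1 - t / n) ^ n := by
        rw [← mul_pow, mul_sub, mul_one, mul_div_cancel₀ _ hn']
    _ ≤ (n : ℝ) ^ n * exp (-t) := by
        gcongr
        exact one_sub_div_pow_le_exp_neg ht

theorem pow_natCast_sub_two_mul_le {k i : ℕ} (h : 2 * i ≤ k) :
    ((k : ℝ) - 2 * i) ^ k ≤ (k : ℝ) ^ k * exp (-2) ^ i := by
  have h' : (2 * i : ℝ) ≤ k := by exact_mod_cast h
  rw [← exp_nat_mul, mul_neg, mul_comm _ (2 : ℝ)]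
  exact natCast_sub_pow_le_pow_mul_exp_neg h'

theorem abs_natCast_sub_two_mul_pow_le {k i : ℕ} (hi : i ≤ k) :
    |(k : ℝ) - 2 * i| ^ k ≤ (k : ℝ) ^ k * exp (-2) ^ i + (k : ℝ) ^ k * exp (-2) ^ (k - i) := by
  have hterm : ∀ j, 0 ≤ (k : ℝ) ^ k * exp (-2) ^ j := fun j => by positivity
  rcases le_total (2 * i) k with h | h
  · have hnonneg : (0 : ℝ) ≤ k - 2 * i := by
      rw [sub_nonneg]; exact_mod_cast h
    rw [abs_of_nonneg hnonneg]
    exact (pow_natCast_sub_two_mul_le h).trans (le_add_of_nonneg_right (hterm _))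
  · have hsymm : |(k : ℝ) - 2 * i| = (k : ℝ) - 2 * (k - i : ℕ) := by
      have hle : (k : ℝ) ≤ 2 * i := by exact_mod_cast h
      rw [Nat.cast_sub hi, abs_of_nonpos (by linarith)]
      ring
    rw [hsymm]
    exact (pow_natCast_sub_two_mul_le (by omega)).trans (le_add_of_nonneg_left (hterm _))

theorem sum_choose_mul_pow_add_pow_sub {R : Type*} [CommSemiring R] (k : ℕ) (a : R) :
    ∑ i ∈ range (k + 1), (k.choose i : R) * (a ^ i + a ^ (k - i)) = 2 * (1 + a) ^ k := by
  have hleft := add_pow a 1 k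
  have hright := add_pow 1 a k
  simp only [one_pow, mul_one, one_mul] at hleft hright
  simp only [mul_add, sum_add_distrib]
  rw [add_comm a 1] at hleft
  rw [two_mul]
  nth_rw 1 [hleft]
  rw [hright]
  congr 1 <;> exact sum_congr rfl fun i _ => mul_comm _ _

theorem binomial_abs_sum_le_general (k : ℕ) :
    ∑ i ∈ Finset.range (k + 1),
        (k.choose i : ℝ) * |(k : ℝ) - 2 * i| ^ k
      ≤ 2 * (k : ℝ) ^ k * (1 + Real.exp (-2)) ^ k := by
  calc ∑ i ∈ range (k + 1), (k.choose i : ℝ) * |(k : ℝ) - 2 * i| ^ k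
      ≤ ∑ i ∈ range (k + 1),
          (k.choose i : ℝ) * ((k : ℝ) ^ k * exp (-2) ^ i + (k : ℝ) ^ k * exp (-2) ^ (k - i)) := by
        gcongr with i hi
        exact abs_natCast_sub_two_mul_pow_le (Nat.lt_succ_iff.mp (mem_range.mp hi))
    _ = (k : ℝ) ^ k * ∑ i ∈ range (k + 1),
          (k.choose i : ℝ) * (exp (-2) ^ i + exp (-2) ^ (k - i)) := by
        rw [mul_sum]
        exact sum_congr rfl fun i _ => by ring
    _ = 2 * (k : ℝ) ^ k * (1 + exp (-2)) ^ k := by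
        rw [sum_choose_mul_pow_add_pow_sub]
        ring

/-- For every positive integer `k`,
`∑ i in range (k+1), (k choose i) * |k - 2i|^k ≤ 2 * k^k * (1 + e^{-2})^k`. -/
theorem binomial_abs_sum_le (k : ℕ) (hk : 1 ≤ k) :
    ∑ i ∈ Finset.range (k + 1),
        (k.choose i : ℝ) * |(k : ℝ) - 2 * i| ^ k
      ≤ 2 * (k : ℝ) ^ k * (1 + Real.exp (-2)) ^ k :=
  binomial_abs_sum_le_general k
end
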